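/- (Lemma 5 of the paper.) Let DB be an uncertain database all of whose existential probabilities lie in [0,1], with each item x carrying a weight w(x) ∈ [0,1], and let minWES be a real number. Let α be a nonempty pattern and α' = α ++ β, where β is a (possibly empty) pattern each of whose items occurs in some sequence of the projected database DB|α. If wExpSup^cap(α) < minWES, then WES(α') < minWES; that is, if the value of wExpSup^cap for a pattern is below the threshold minWES, then the weighted expected support of that pattern and of all such super patterns must not satisfy the threshold. -/

import Mathlib

variable {I : Type*}

/-- An uncertain sequence: a finite list of (item, existential probability) pairs. -/
abbrev USeq (I : Type*) := List (I × ℝ)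

/-- An uncertain database: a finite list of uncertain sequences. -/
abbrev UDB (I : Type*) := List (USeq I)

/-- `α` occurs in `S`: some sublist of `S` has item list `α`. -/
def Occurs (α : List I) (S : USeq I) : Prop :=
  ∃ o : USeq I, o.Sublist S ∧ o.map Prod.fst = α

/-- Maximum occurrence probability of pattern `α` in `S`
(`0` if `α` has no occurrence in `S`; `1` for the empty pattern). -/
noncomputable def maxPrS [DecidableEq I] (α : List I) (S : USeq I) : ℝ :=
  WithBot.unbotD 0 (((S.sublists.filter fun o => decide (o.map Prod.fst = α)).map
      fun o => (o.map Prod.snd).prod).maximum)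

/-- Greedy projection: `projSeq α S = some S'` iff `α` occurs in `S`, in which case `S'`
is the suffix of `S` strictly after the last matched position of the greedy (leftmost)
occurrence of `α` in `S`.  For the empty pattern it is `S` itself. -/
def projSeq [DecidableEq I] : List I → USeq I → Option (USeq I)
  | [], S => some S
  | _ :: _, [] => none
  | i :: α, (x, _) :: rest =>
      if x = i then projSeq α rest else projSeq (i :: α) rest

/-- The projected database `DB|α`. -/
def projDB [DecidableEq I] (α : List I) (DB : UDB I) : UDB I :=
  DB.filterMap (projSeq α)

/-- `P̂_D(i)`: maximum probability of an entry with item `i` over all sequences of `D`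
(`0` if `i` occurs in no sequence of `D`). -/
noncomputable def Phat [DecidableEq I] (D : UDB I) (i : I) : ℝ :=
  WithBot.unbotD 0 (((D.flatten.filter fun e => decide (e.1 = i)).map Prod.snd).maximum)

/-- `maxPr(α)` relative to `DB`: the product of per-step maximum probabilities over the
successively projected databases. -/
noncomputable def maxPrDB [DecidableEq I] (DB : UDB I) (α : List I) : ℝ :=
  ∏ k : Fin α.length, Phat (projDB (α.take k.val) DB) (α.get k)

/-- Expected support of `α` in `DB`. -/
noncomputable def expSup [DecidableEq I] (DB : UDB I) (α : List I) : ℝ :=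
  (DB.map fun S => maxPrS α S).sum

/-- `expSup^cap` of a nonempty pattern (junk value `0` on the empty pattern). -/
noncomputable def expSupCap [DecidableEq I] (DB : UDB I) (α : List I) : ℝ :=
  match α.getLast? with
  | none => 0
  | some i =>
      maxPrDB DB α.dropLast *
        ((projDB α.dropLast DB).map fun S' => maxPrS [i] S').sum

/-- Number of sequences of `D` in which item `i` occurs. -/
def supCount [DecidableEq I] (D : UDB I) (i : I) : ℕ :=
  (D.filter fun S => decide (i ∈ S.map Prod.fst)).length

/-- `expSupport^top` of a nonempty pattern (junk value `0` on the empty pattern). -/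
noncomputable def expSupTop [DecidableEq I] (DB : UDB I) (α : List I) : ℝ :=
  match α.getLast? with
  | none => 0
  | some i =>
      maxPrDB DB α.dropLast * Phat (projDB α.dropLast DB) i *
        (supCount (projDB α.dropLast DB) i : ℝ)

/-- Item `i` occurs in some sequence of `D`. -/
def ItemOccursIn (D : UDB I) (i : I) : Prop :=
  ∃ S ∈ D, i ∈ S.map Prod.fst

/-- `sWeight`: average weight of the items of a pattern. -/
noncomputable def sWeight (w : I → ℝ) (α : List I) : ℝ :=
  (α.map w).sum / (α.length : ℝ)

/-- Maximum weight among the items of a pattern (`0` for the empty pattern). -/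
noncomputable def mxWs (w : I → ℝ) (α : List I) : ℝ :=
  WithBot.unbotD 0 ((α.map w).maximum)

/-- Maximum weight among items occurring in some sequence of `D` (`0` if none). -/
noncomputable def mxWDB (w : I → ℝ) (D : UDB I) : ℝ :=
  WithBot.unbotD 0 ((D.flatten.map fun e => w e.1).maximum)

/-- `wgt^cap`. -/
noncomputable def wgtCap [DecidableEq I] (DB : UDB I) (w : I → ℝ) (α : List I) : ℝ :=
  max (mxWDB w (projDB α.dropLast DB)) (mxWs w α)

/-- Weighted expected support. -/
noncomputable def WES [DecidableEq I] (DB : UDB I) (w : I → ℝ) (α : List I) : ℝ :=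
  expSup DB α * sWeight w α

/-- `wExpSup^cap`. -/
noncomputable def wExpSupCap [DecidableEq I] (DB : UDB I) (w : I → ℝ) (α : List I) : ℝ :=
  expSupCap DB α * wgtCap DB w α
/-!
Write `α = γ ++ [i]` and split an occurrence of `α ++ β` in `S` as `o₁ ++ e :: o₂`, with `o₁`
an occurrence of `γ` and `e.1 = i`. The greedy occurrence of `γ` ends no later than `o₁`, so
`e` is an entry of `S|γ` and `e.2 ≤ maxPr_{S|γ}([i])`; the same argument bounds each entry of
`o₁` by the matching factor `P̂` of `maxPr(γ)`, and `o₂` contributes a factor at most `1`.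
Summing over `DB` gives `expSup(α ++ β) ≤ expSup^cap(α)`. On the weight side, each item of
`α ++ β` lies in `α` or occurs in `DB|α`, whose sequences are sublists of those of `DB|γ`, so
the mean weight `sWeight(α ++ β)` is at most `wgt^cap(α)`.
-/

namespace List

section Maximum

variable {α : Type*} [LinearOrder α] {l : List α} {c d : α}

lemma le_unbotD_maximum_of_mem {x : α} (hx : x ∈ l) : x ≤ l.maximum.unbotD d := by
  cases hm : l.maximum with
  | bot => exact absurd (hm ▸ le_maximum_of_mem' hx) (by simp)
  | coe m => simpa using le_maximum_of_mem hx hm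

lemma le_unbotD_maximum (hd : c ≤ d) (h : ∀ x ∈ l, c ≤ x) : c ≤ l.maximum.unbotD d := by
  cases hm : l.maximum with
  | bot => simpa using hd
  | coe m => simpa using h m (maximum_mem hm)

lemma unbotD_maximum_le (hd : d ≤ c) (h : ∀ x ∈ l, x ≤ c) : l.maximum.unbotD d ≤ c := by
  cases hm : l.maximum with
  | bot => simpa using hd
  | coe m => simpa using h m (maximum_mem hm)

end Maximum

lemma prod_le_one {R : Type*} [CommMonoidWithZero R] [Preorder R] [ZeroLEOneClass R]
    [PosMulMono R] : ∀ {l : List R}, (∀ x ∈ l, 0 ≤ x) → (∀ x ∈ l, x ≤ 1) → l.prod ≤ 1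
  | [], _, _ => by simp
  | x :: l, h0, h1 => by
    rw [prod_cons]
    exact (mul_le_of_le_one_right (h0 x mem_cons_self)
      (prod_le_one (fun y hy => h0 y (mem_cons_of_mem _ hy))
        (fun y hy => h1 y (mem_cons_of_mem _ hy)))).trans (h1 x mem_cons_self)

lemma sum_map_filterMap {α β M : Type*} [AddMonoid M] (f : α → Option β) (g : β → M)
    (l : List α) : ((l.filterMap f).map g).sum = (l.map fun a => (f a).elim 0 g).sum := by
  induction l with
  | nil => rfl
  | cons a l ih => cases h : f a <;> simp [h, ih]

end List

section Occurrence

variable [DecidableEq I]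

lemma le_maxPrS {S o : USeq I} (ho : o.Sublist S) :
    (o.map Prod.snd).prod ≤ maxPrS (o.map Prod.fst) S :=
  List.le_unbotD_maximum_of_mem <| List.mem_map.mpr
    ⟨o, List.mem_filter.mpr ⟨List.mem_sublists.mpr ho, by simp⟩, rfl⟩

lemma maxPrS_le {α : List I} {S : USeq I} {c : ℝ} (hc : 0 ≤ c)
    (h : ∀ o : USeq I, o.Sublist S → o.map Prod.fst = α → (o.map Prod.snd).prod ≤ c) :
    maxPrS α S ≤ c := by
  refine List.unbotD_maximum_le hc fun x hx => ?_
  simp only [List.mem_map, List.mem_filter, List.mem_sublists, decide_eq_true_eq] at hx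
  obtain ⟨o, ⟨ho, hoα⟩, rfl⟩ := hx
  exact h o ho hoα

lemma maxPrS_nonneg {α : List I} {S : USeq I} (hS : ∀ e ∈ S, 0 ≤ e.2) : 0 ≤ maxPrS α S := by
  refine List.le_unbotD_maximum le_rfl fun x hx => ?_
  simp only [List.mem_map, List.mem_filter, List.mem_sublists] at hx
  obtain ⟨o, ⟨ho, -⟩, rfl⟩ := hx
  exact List.prod_nonneg fun a ha => by
    obtain ⟨e, he, rfl⟩ := List.mem_map.mp ha
    exact hS e (ho.subset he)

lemma projSeq_sublist : ∀ {γ : List I} {S T : USeq I}, projSeq γ S = some T → T.Sublist S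
  | [], S, T, h => by
    rw [projSeq, Option.some_inj] at h
    exact h ▸ .refl S
  | _ :: _, [], _, h => by cases h
  | i :: γ, (x, _) :: _, _, h => by
    unfold projSeq at h
    split_ifs at h
    · exact (projSeq_sublist h).cons _
    · exact (projSeq_sublist h).cons _

lemma projSeq_append : ∀ (γ δ : List I) (S : USeq I),
    projSeq (γ ++ δ) S = (projSeq γ S).bind (projSeq δ)
  | [], _, _ => by simp [projSeq]
  | _ :: _, _, [] => rfl
  | i :: γ, δ, (x, _) :: rest => by
    simp only [List.cons_append, projSeq]
    split_ifs
    · exact projSeq_append γ δ rest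
    · exact projSeq_append (i :: γ) δ rest

lemma exists_projSeq_eq_some_of_append_sublist {o₁ o₂ : USeq I} :
    ∀ {S : USeq I}, (o₁ ++ o₂).Sublist S →
      ∃ T, projSeq (o₁.map Prod.fst) S = some T ∧ o₂.Sublist T
  | [], h => by
    obtain ⟨rfl, rfl⟩ := List.append_eq_nil_iff.mp (List.sublist_nil.mp h)
    exact ⟨[], rfl, .refl _⟩
  | (x, p) :: rest, h => by
    cases o₁ with
    | nil => exact ⟨_, rfl, h⟩
    | cons e o₁ =>
      rcases List.sublist_cons_iff.mp h with hskip | ⟨r, hr, hmatch⟩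
      · by_cases hx : x = e.1
        · obtain ⟨T, hT, hsub⟩ :=
            exists_projSeq_eq_some_of_append_sublist (List.sublist_of_cons_sublist hskip)
          exact ⟨T, by simp [projSeq, hx, hT], hsub⟩
        · obtain ⟨T, hT, hsub⟩ := exists_projSeq_eq_some_of_append_sublist hskip
          exact ⟨T, by simpa [projSeq, hx] using hT, hsub⟩
      · obtain ⟨rfl, rfl⟩ := List.cons_eq_cons.mp hr
        obtain ⟨T, hT, hsub⟩ := exists_projSeq_eq_some_of_append_sublist hmatch
        exact ⟨T, by simp [projSeq, hT], hsub⟩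

lemma exists_sublist_of_mem_projDB_append {γ δ : List I} {DB : UDB I} {T : USeq I}
    (hT : T ∈ projDB (γ ++ δ) DB) : ∃ T' ∈ projDB γ DB, T.Sublist T' := by
  obtain ⟨S, hS, hST⟩ := List.mem_filterMap.mp hT
  rw [projSeq_append] at hST
  obtain ⟨T', hT', hT'T⟩ := Option.bind_eq_some_iff.mp hST
  exact ⟨T', List.mem_filterMap.mpr ⟨S, hS, hT'⟩, projSeq_sublist hT'T⟩

lemma ItemOccursIn.of_projDB_append {γ δ : List I} {DB : UDB I} {i : I}
    (h : ItemOccursIn (projDB (γ ++ δ) DB) i) : ItemOccursIn (projDB γ DB) i := by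
  obtain ⟨T, hT, hiT⟩ := h
  obtain ⟨T', hT', hsub⟩ := exists_sublist_of_mem_projDB_append hT
  exact ⟨T', hT', (hsub.map Prod.fst).subset hiT⟩

lemma projDB_entries_nonneg {DB : UDB I} (hp : ∀ S ∈ DB, ∀ e ∈ S, 0 ≤ e.2) (γ : List I) :
    ∀ T ∈ projDB γ DB, ∀ e ∈ T, 0 ≤ e.2 := by
  intro T hT e he
  obtain ⟨S, hS, hST⟩ := List.mem_filterMap.mp hT
  exact hp S hS e ((projSeq_sublist hST).subset he)


lemma le_Phat {D : UDB I} {T : USeq I} {e : I × ℝ} (hT : T ∈ D) (he : e ∈ T) :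
    e.2 ≤ Phat D e.1 :=
  List.le_unbotD_maximum_of_mem <| List.mem_map.mpr
    ⟨e, List.mem_filter.mpr ⟨List.mem_flatten.mpr ⟨T, hT, he⟩, by simp⟩, rfl⟩

lemma Phat_nonneg {D : UDB I} (hD : ∀ T ∈ D, ∀ e ∈ T, 0 ≤ e.2) (i : I) : 0 ≤ Phat D i := by
  refine List.le_unbotD_maximum le_rfl fun x hx => ?_
  obtain ⟨e, he, rfl⟩ := List.mem_map.mp hx
  obtain ⟨T, hT, heT⟩ := List.mem_flatten.mp (List.mem_filter.mp he).1
  exact hD T hT e heT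

lemma maxPrDB_concat (DB : UDB I) (γ : List I) (i : I) :
    maxPrDB DB (γ ++ [i]) = maxPrDB DB γ * Phat (projDB γ DB) i := by
  unfold maxPrDB
  rw [← Fin.prod_congr' _ (by simp : γ.length + 1 = (γ ++ [i]).length),
    Fin.prod_univ_castSucc]
  congr 1
  · refine Finset.prod_congr rfl fun k _ => ?_
    simp [List.take_append_of_le_length k.isLt.le, List.getElem_append_left k.isLt]
  · simp

lemma maxPrDB_nonneg {DB : UDB I} (hp : ∀ S ∈ DB, ∀ e ∈ S, 0 ≤ e.2) (γ : List I) :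
    0 ≤ maxPrDB DB γ :=
  Finset.prod_nonneg fun _ _ => Phat_nonneg (projDB_entries_nonneg hp _) _


lemma prod_le_maxPrDB {DB : UDB I} (hp : ∀ S ∈ DB, ∀ e ∈ S, 0 ≤ e.2) {S : USeq I} (hS : S ∈ DB)
    {o : USeq I} (ho : o.Sublist S) : (o.map Prod.snd).prod ≤ maxPrDB DB (o.map Prod.fst) := by
  induction o using List.reverseRecOn with
  | nil => exact (Fin.prod_univ_zero _).ge
  | append_singleton o e ih =>
    obtain ⟨T, hT, heT⟩ := exists_projSeq_eq_some_of_append_sublist ho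
    have hTDB : T ∈ projDB (o.map Prod.fst) DB := List.mem_filterMap.mpr ⟨S, hS, hT⟩
    simp only [List.map_append, List.map_singleton, List.prod_append, List.prod_singleton,
      maxPrDB_concat]
    exact mul_le_mul (ih ((List.sublist_append_left o [e]).trans ho))
      (le_Phat hTDB (heT.subset (List.mem_singleton_self e))) (hp S hS e (ho.subset (by simp)))
      (maxPrDB_nonneg hp _)

lemma maxPrS_append_cons_le {DB : UDB I} (hp : ∀ S ∈ DB, ∀ e ∈ S, e.2 ∈ Set.Icc (0 : ℝ) 1)
    {S : USeq I} (hS : S ∈ DB) (γ : List I) (i : I) (β : List I) :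
    maxPrS (γ ++ i :: β) S ≤ maxPrDB DB γ * (projSeq γ S).elim 0 (maxPrS [i]) := by
  have hp0 : ∀ S ∈ DB, ∀ e ∈ S, 0 ≤ e.2 := fun S hS e he => (hp S hS e he).1
  have hproj0 : 0 ≤ (projSeq γ S).elim 0 (maxPrS [i]) := by
    cases hT : projSeq γ S with
    | none => exact le_rfl
    | some T => exact maxPrS_nonneg fun e he => hp0 S hS e ((projSeq_sublist hT).subset he)
  refine maxPrS_le (mul_nonneg (maxPrDB_nonneg hp0 γ) hproj0) fun o ho hoα => ?_
  obtain ⟨o₁, o', rfl, rfl, ho'⟩ := List.map_eq_append_iff.mp hoα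
  obtain ⟨e, o₂, rfl, rfl, rfl⟩ := List.map_eq_cons_iff.mp ho'
  obtain ⟨T, hT, heT⟩ := exists_projSeq_eq_some_of_append_sublist ho
  have hoS : ∀ x ∈ o₁ ++ e :: o₂, x.2 ∈ Set.Icc (0 : ℝ) 1 := fun x hx => hp S hS x (ho.subset hx)
  have h₁ : (o₁.map Prod.snd).prod ≤ maxPrDB DB (o₁.map Prod.fst) :=
    prod_le_maxPrDB hp0 hS ((List.sublist_append_left _ _).trans ho)
  have h₂ : e.2 ≤ maxPrS [e.1] T := by
    simpa using le_maxPrS ((List.cons_sublist_cons.mpr (List.nil_sublist o₂)).trans heT)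
  have ho₂ : ∀ x ∈ o₂.map Prod.snd, x ∈ Set.Icc (0 : ℝ) 1 :=
    List.forall_mem_map.mpr fun y hy => hoS y (by simp [hy])
  have h₃ : (o₂.map Prod.snd).prod ≤ 1 :=
    List.prod_le_one (fun x hx => (ho₂ x hx).1) (fun x hx => (ho₂ x hx).2)
  have h₂₀ : 0 ≤ e.2 := (hoS e (by simp)).1
  have h₃₀ : 0 ≤ (o₂.map Prod.snd).prod := List.prod_nonneg fun x hx => (ho₂ x hx).1
  rw [hT]
  calc ((o₁ ++ e :: o₂).map Prod.snd).prod
      = (o₁.map Prod.snd).prod * (e.2 * (o₂.map Prod.snd).prod) := by simp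
    _ ≤ maxPrDB DB (o₁.map Prod.fst) * (maxPrS [e.1] T * 1) :=
        mul_le_mul h₁ (mul_le_mul h₂ h₃ h₃₀ (h₂₀.trans h₂)) (mul_nonneg h₂₀ h₃₀)
          (maxPrDB_nonneg hp0 _)
    _ = _ := by simp

lemma expSup_append_le_expSupCap {DB : UDB I}
    (hp : ∀ S ∈ DB, ∀ e ∈ S, e.2 ∈ Set.Icc (0 : ℝ) 1) {α : List I} (hα : α ≠ []) (β : List I) :
    expSup DB (α ++ β) ≤ expSupCap DB α := by
  obtain ⟨γ, i, rfl⟩ : ∃ γ i, α = γ ++ [i] := ⟨_, _, (List.dropLast_append_getLast hα).symm⟩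
  rw [List.append_assoc, List.singleton_append, expSup, expSupCap, List.getLast?_concat]
  dsimp only
  rw [List.dropLast_concat]
  calc (DB.map fun S => maxPrS (γ ++ i :: β) S).sum
      ≤ (DB.map fun S => maxPrDB DB γ * (projSeq γ S).elim 0 (maxPrS [i])).sum :=
        List.sum_le_sum fun S hS => maxPrS_append_cons_le hp hS γ i β
    _ = maxPrDB DB γ * ((projDB γ DB).map fun S' => maxPrS [i] S').sum := by
        rw [List.sum_map_mul_left, projDB, List.sum_map_filterMap]

lemma expSup_nonneg {DB : UDB I} (hp : ∀ S ∈ DB, ∀ e ∈ S, 0 ≤ e.2) (α : List I) :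
    0 ≤ expSup DB α :=
  List.sum_nonneg fun x hx => by
    obtain ⟨S, hS, rfl⟩ := List.mem_map.mp hx
    exact maxPrS_nonneg (hp S hS)

end Occurrence

section Weight

variable (w : I → ℝ)

lemma le_mxWs {α : List I} {x : I} (hx : x ∈ α) : w x ≤ mxWs w α :=
  List.le_unbotD_maximum_of_mem (List.mem_map_of_mem hx)

lemma ItemOccursIn.le_mxWDB {D : UDB I} {i : I} (h : ItemOccursIn D i) : w i ≤ mxWDB w D := by
  obtain ⟨T, hT, hiT⟩ := h
  obtain ⟨e, he, rfl⟩ := List.mem_map.mp hiT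
  exact List.le_unbotD_maximum_of_mem (List.mem_map_of_mem (List.mem_flatten_of_mem hT he))

lemma sWeight_nonneg (hw : ∀ x, 0 ≤ w x) (α : List I) : 0 ≤ sWeight w α :=
  div_nonneg (List.sum_nonneg (List.forall_mem_map.mpr fun x _ => hw x)) (Nat.cast_nonneg _)

lemma sWeight_le_of_forall_le {α : List I} (hα : α ≠ []) {c : ℝ} (h : ∀ x ∈ α, w x ≤ c) :
    sWeight w α ≤ c := by
  have hlen : (0 : ℝ) < α.length := by exact_mod_cast List.length_pos_iff.mpr hα
  rw [sWeight, div_le_iff₀ hlen]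
  calc (α.map w).sum ≤ (α.map w).length • c :=
        List.sum_le_card_nsmul _ _ (List.forall_mem_map.mpr h)
    _ = c * α.length := by rw [List.length_map, nsmul_eq_mul, mul_comm]

lemma sWeight_append_le_wgtCap [DecidableEq I] {DB : UDB I} {α : List I} (hα : α ≠ [])
    {β : List I} (hβ : ∀ i ∈ β, ItemOccursIn (projDB α DB) i) :
    sWeight w (α ++ β) ≤ wgtCap DB w α := by
  refine sWeight_le_of_forall_le w (List.append_ne_nil_of_left_ne_nil hα β) fun x hx => ?_
  rcases List.mem_append.mp hx with hxα | hxβ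
  · exact (le_mxWs w hxα).trans (le_max_right _ _)
  · have hocc := hβ x hxβ
    rw [← List.dropLast_append_getLast hα] at hocc
    exact (hocc.of_projDB_append.le_mxWDB w).trans (le_max_left _ _)

end Weight

/-- Lemma 5: if all probabilities lie in `[0,1]`, all weights lie in `[0,1]`, `α` is
nonempty and every item of `β` occurs in some sequence of `DB|α`, then
`wExpSup^cap(α) < minWES` implies `WES(α ++ β) < minWES`. -/
theorem WES_lt_of_wExpSupCap_lt [DecidableEq I]
    (DB : UDB I) (hp : ∀ S ∈ DB, ∀ e ∈ S, e.2 ∈ Set.Icc (0 : ℝ) 1)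
    (w : I → ℝ) (hw : ∀ x : I, w x ∈ Set.Icc (0 : ℝ) 1)
    (minWES : ℝ) (α β : List I) (hα : α ≠ [])
    (hβocc : ∀ i ∈ β, ItemOccursIn (projDB α DB) i)
    (hlt : wExpSupCap DB w α < minWES) :
    WES DB w (α ++ β) < minWES := by
  have hexp := expSup_append_le_expSupCap hp hα β
  have hexp₀ := expSup_nonneg (fun S hS e he => (hp S hS e he).1) (α ++ β)
  have hweight := sWeight_append_le_wgtCap w hα hβocc
  have hweight₀ := sWeight_nonneg w (fun x => (hw x).1) (α ++ β)
  calc WES DB w (α ++ β) ≤ wExpSupCap DB w α :=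
        mul_le_mul hexp hweight hweight₀ (hexp₀.trans hexp)
    _ < minWES := hlt
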